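/- Let ξ_1,…,ξ_J be i.i.d. random vectors with i.i.d. Rademacher coordinates in {-1,1}^m, X_0 = x_0 ∈ ℝ^d fixed, and X_j = Φ(X_{j-1}, ξ_j) for measurable Φ : ℝ^{d+m} → ℝ^d. For a bounded measurable f : ℝ^d → ℝ, define q_J = f and q_{j-1}(x) = E[q_j(X_j) | X_{j-1} = x] = 2^{-m} Σ_{y∈{-1,1}^m} q_j(Φ(x,y)). Then f(X_J) = E[f(X_J)] + Σ_{j=1}^J Σ_{k∈{0,1}^m\{0}} a_{j,k}(X_{j-1}) ∏_{i=1}^m (ξ_j^i)^{k_i}, where a_{j,k}(x) = 2^{-m} Σ_{y∈{-1,1}^m} (∏_{i=1}^m y_i^{k_i}) q_j(Φ(x,y)). -/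

import Mathlib

/-!
The Walsh functions `w_k(y) = ∏ᵢ yᵢ^{kᵢ}`, `k ∈ {0,1}^m`, are orthogonal on `{-1,1}^m`, with
`∑_k w_k(y') w_k(y) = ∏ᵢ (1 + y'ᵢ yᵢ) = 2^m [y' = y]`; hence every `g` on the cube equals
`∑_k a_k(g) w_k` there, and the `k = 0` coefficient is the mean of `g`. Taking
`g = q_{j+1}(Φ(X_j, ·))` at `y = ξ_j` shows that the increment `q_{j+1}(X_{j+1}) - q_j(X_j)` is
exactly the `k ≠ 0` part of the expansion, so the representation holds with `q_0(x_0)` in place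
of the mean, by telescoping.

It remains to see `E f(X_J) = q_0(x_0)`. The state `X_j` is measurable with respect to the
innovations of rows `< j`, hence independent of the row `ξ_j`, which is uniform on the cube; so
`E q_{j+1}(Φ(X_j, ξ_j)) = E[2^{-m} ∑_y q_{j+1}(Φ(X_j, y))] = E q_j(X_j)`.
-/

open MeasureTheory ProbabilityTheory Finset

noncomputable section

def signCube (m : ℕ) : Finset (Fin m → ℝ) := Fintype.piFinset fun _ => {-1, 1}

/-- The Walsh function indexed by `k`, i.e. `∏_{i ∈ k} yᵢ` when `k` is read as a subset. -/
def walsh {m : ℕ} (k : Fin m → Fin 2) (y : Fin m → ℝ) : ℝ := ∏ i, y i ^ (k i : ℕ)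

def cubeMean {m : ℕ} (h : (Fin m → ℝ) → ℝ) : ℝ := (2 ^ m)⁻¹ * ∑ y ∈ signCube m, h y

def walshCoeff {m : ℕ} (g : (Fin m → ℝ) → ℝ) (k : Fin m → Fin 2) : ℝ :=
  cubeMean fun y => walsh k y * g y

end

section Walsh

variable {m : ℕ}

lemma mem_signCube {y : Fin m → ℝ} : y ∈ signCube m ↔ ∀ i, y i = -1 ∨ y i = 1 := by
  simp [signCube]

lemma card_signCube : #(signCube m) = 2 ^ m := by
  simp [signCube, card_insert_of_notMem (show (-1 : ℝ) ∉ ({1} : Finset ℝ) by norm_num)]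

lemma abs_cubeMean_le {h : (Fin m → ℝ) → ℝ} {C : ℝ} (hC : ∀ y, |h y| ≤ C) :
    |cubeMean h| ≤ C := by
  have hsum : |∑ y ∈ signCube m, h y| ≤ 2 ^ m * C := by
    calc |∑ y ∈ signCube m, h y| ≤ ∑ y ∈ signCube m, |h y| := abs_sum_le_sum_abs _ _
      _ ≤ ∑ _y ∈ signCube m, C := sum_le_sum fun y _ => hC y
      _ = 2 ^ m * C := by simp [card_signCube]
  rw [cubeMean, abs_mul, abs_of_pos (by positivity), inv_mul_le_iff₀ (by positivity)]
  exact hsum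

lemma sum_walsh_mul_walsh (y y' : Fin m → ℝ) :
    ∑ k, walsh k y' * walsh k y = ∏ i, (1 + y' i * y i) := by
  simp_rw [walsh, ← prod_mul_distrib, ← mul_pow]
  rw [← Fintype.prod_sum fun i (j : Fin 2) => (y' i * y i) ^ (j : ℕ)]
  simp [Fin.sum_univ_two]

lemma prod_one_add_mul_eq_ite {y y' : Fin m → ℝ} (hy : y ∈ signCube m) (hy' : y' ∈ signCube m) :
    ∏ i, (1 + y' i * y i) = if y' = y then 2 ^ m else 0 := by
  rw [mem_signCube] at hy hy'
  split_ifs with h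
  · subst h
    have : ∀ i, 1 + y' i * y' i = 2 := fun i => by rcases hy' i with h | h <;> rw [h] <;> norm_num
    simp [this]
  · obtain ⟨i, hi⟩ := Function.ne_iff.mp h
    refine prod_eq_zero (mem_univ i) ?_
    rcases hy i with h1 | h1 <;> rcases hy' i with h2 | h2 <;> simp_all

lemma sum_walshCoeff_mul_walsh (g : (Fin m → ℝ) → ℝ) {y : Fin m → ℝ} (hy : y ∈ signCube m) :
    ∑ k, walshCoeff g k * walsh k y = g y := by
  calc ∑ k, walshCoeff g k * walsh k y
      = (2 ^ m)⁻¹ * ∑ y' ∈ signCube m, (∑ k, walsh k y' * walsh k y) * g y' := by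
        simp_rw [walshCoeff, cubeMean, mul_assoc, ← mul_sum, sum_mul]
        rw [sum_comm]
        refine congrArg _ (sum_congr rfl fun y' _ => sum_congr rfl fun k _ => by ring)
    _ = (2 ^ m)⁻¹ * ∑ y' ∈ signCube m, if y' = y then 2 ^ m * g y else 0 := by
        refine congrArg _ (sum_congr rfl fun y' hy' => ?_)
        rw [sum_walsh_mul_walsh, prod_one_add_mul_eq_ite hy hy', ite_mul, zero_mul]
        split_ifs with h <;> simp [h]
    _ = g y := by rw [sum_ite_eq' _ y, if_pos hy, inv_mul_cancel_left₀ (by positivity)]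

lemma walshCoeff_zero (g : (Fin m → ℝ) → ℝ) : walshCoeff g 0 = cubeMean g := by
  simp [walshCoeff, walsh]

lemma sub_cubeMean_eq_sum_walsh (g : (Fin m → ℝ) → ℝ) {y : Fin m → ℝ} (hy : y ∈ signCube m) :
    g y - cubeMean g = ∑ k ∈ univ \ {0}, walshCoeff g k * walsh k y := by
  rw [← sum_walshCoeff_mul_walsh g hy, sum_eq_sum_sdiff_singleton_add (mem_univ 0),
    walshCoeff_zero]
  simp [walsh]

end Walsh

section Probability

variable {Ω : Type*} [MeasurableSpace Ω] {μ : Measure Ω}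

lemma ae_eq_neg_one_or_eq_one [IsProbabilityMeasure μ] {Z : Ω → ℝ} (hZ : Measurable Z)
    (h1 : μ {ω | Z ω = 1} = 1 / 2) (hm1 : μ {ω | Z ω = -1} = 1 / 2) :
    ∀ᵐ ω ∂μ, Z ω = -1 ∨ Z ω = 1 := by
  have hdisj : Disjoint {ω | Z ω = -1} {ω | Z ω = 1} :=
    Set.disjoint_left.mpr fun ω h h' => by norm_num [Set.mem_ofPred_eq.mp h] at h'
  rw [ae_iff_measure_eq, Set.ofPred_or, measure_union hdisj (hZ (measurableSet_singleton 1)), h1,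
    hm1, ENNReal.add_halves, measure_univ]
  exact ((hZ (measurableSet_singleton _)).union (hZ (measurableSet_singleton _))).nullMeasurableSet

lemma ProbabilityTheory.iIndepFun.measure_pi_preimage_singleton {ι β : Type*} [Fintype ι]
    [MeasurableSpace β] [MeasurableSingletonClass β] {Z : ι → Ω → β} (hZ : iIndepFun Z μ)
    (y : ι → β) :
    μ ((fun ω i => Z i ω) ⁻¹' {y}) = ∏ i, μ (Z i ⁻¹' {y i}) := by
  have hpre : (fun ω i => Z i ω) ⁻¹' {y} = ⋂ i, Z i ⁻¹' {y i} := by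
    ext ω; simp [funext_iff]
  rw [hpre]
  exact hZ.meas_iInter fun i => ⟨{y i}, measurableSet_singleton _, rfl⟩

lemma integral_comp_eq_sum_of_indepFun {α β : Type*} [MeasurableSpace α] [MeasurableSpace β]
    [MeasurableSingletonClass β] {X : Ω → α} {Y : Ω → β} (hX : Measurable X) (hY : Measurable Y)
    (hXY : IndepFun X Y μ) {H : Finset β} (hYH : ∀ᵐ ω ∂μ, Y ω ∈ H) {g : α → β → ℝ}
    (hg : ∀ y ∈ H, Measurable fun x => g x y)
    (hgi : ∀ y ∈ H, Integrable (fun ω => g (X ω) y) μ) :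
    ∫ ω, g (X ω) (Y ω) ∂μ = ∑ y ∈ H, μ.real (Y ⁻¹' {y}) * ∫ ω, g (X ω) y ∂μ := by
  have hYy : ∀ y : β, MeasurableSet (Y ⁻¹' {y}) := fun y => hY (measurableSet_singleton y)
  have hsplit : (fun ω => g (X ω) (Y ω))
      =ᵐ[μ] fun ω => ∑ y ∈ H, (Y ⁻¹' {y}).indicator (fun ω => g (X ω) y) ω := by
    filter_upwards [hYH] with ω hω
    rw [sum_eq_single_of_mem (Y ω) hω fun y _ hy => Set.indicator_of_notMem (fun h => hy h.symm) _,
      Set.indicator_of_mem (show ω ∈ Y ⁻¹' {Y ω} from rfl)]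
  rw [integral_congr_ae hsplit, integral_finsetSum H fun y hy => (hgi y hy).indicator (hYy y)]
  refine sum_congr rfl fun y hy => ?_
  rw [integral_indicator (hYy y)]
  exact Indep.setIntegral_eq_mul hY.comap_le ((IndepFun_iff_Indep X Y μ).mp hXY).symm
    hX.aemeasurable ⟨{y}, measurableSet_singleton y, rfl⟩ (hg y hy).aestronglyMeasurable

end Probability

section Chain

variable {Ω α β : Type*} [MeasurableSpace α] [MeasurableSpace β] {J m : ℕ}
  {ξ : Fin J → Fin m → Ω → β} {Φ : α → (Fin m → β) → α} {x0 : α} {X : ℕ → Ω → α}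

abbrev innovationSigma (ξ : Fin J → Fin m → Ω → β) (S : Set (Fin J × Fin m)) :
    MeasurableSpace Ω :=
  ⨆ p ∈ S, MeasurableSpace.comap (ξ p.1 p.2) inferInstance

lemma measurable_innovation {S : Set (Fin J × Fin m)} {p : Fin J × Fin m} (hp : p ∈ S) :
    Measurable[innovationSigma ξ S] (ξ p.1 p.2) :=
  Measurable.of_comap_le
    (le_iSup₂ (f := fun p (_ : p ∈ S) => MeasurableSpace.comap (ξ p.1 p.2) inferInstance) p hp)

lemma measurable_innovation_row {S : Set (Fin J × Fin m)} {j : Fin J} (hj : ∀ i, (j, i) ∈ S) :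
    Measurable[innovationSigma ξ S] fun ω i => ξ j i ω :=
  @measurable_pi_lambda _ _ _ (innovationSigma ξ S) _ _ fun i => measurable_innovation (hj i)

lemma measurable_chain_past (hΦ : Measurable (Function.uncurry Φ)) (hX0 : ∀ ω, X 0 ω = x0)
    (hXrec : ∀ j : Fin J, ∀ ω, X ((j : ℕ) + 1) ω = Φ (X (j : ℕ) ω) (fun i => ξ j i ω))
    {n : ℕ} (hn : n ≤ J) :
    Measurable[innovationSigma ξ {p | (p.1 : ℕ) < n}] (X n) := by
  induction n with
  | zero => rw [show X 0 = fun _ => x0 from funext hX0]; exact measurable_const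
  | succ n ih =>
    have hmono : innovationSigma ξ {p | (p.1 : ℕ) < n} ≤
        innovationSigma ξ {p | (p.1 : ℕ) < n + 1} :=
      biSup_mono fun p (hp : (p.1 : ℕ) < n) => Nat.lt_succ_of_lt hp
    rw [funext (hXrec ⟨n, hn⟩)]
    exact hΦ.comp (((ih (by omega)).mono hmono le_rfl).prodMk
      (measurable_innovation_row (j := ⟨n, hn⟩) fun _ => Nat.lt_succ_self n))

lemma indepFun_chain_row [MeasurableSpace Ω] {μ : Measure Ω} (hξ : ∀ j i, Measurable (ξ j i))
    (hindep : iIndepFun (fun p : Fin J × Fin m => ξ p.1 p.2) μ)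
    (hΦ : Measurable (Function.uncurry Φ)) (hX0 : ∀ ω, X 0 ω = x0)
    (hXrec : ∀ j : Fin J, ∀ ω, X ((j : ℕ) + 1) ω = Φ (X (j : ℕ) ω) (fun i => ξ j i ω))
    (j : Fin J) :
    IndepFun (X j) (fun ω i => ξ j i ω) μ := by
  have hiIndep : iIndep (fun p : Fin J × Fin m =>
      MeasurableSpace.comap (ξ p.1 p.2) inferInstance) μ :=
    (iIndepFun_iff_iIndep _ _ μ).mp hindep
  have hdisj : Disjoint {p : Fin J × Fin m | (p.1 : ℕ) < j} {p | p.1 = j} :=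
    Set.disjoint_left.mpr fun p (hlt : (p.1 : ℕ) < j) (heq : p.1 = j) =>
      hlt.ne (congrArg Fin.val heq)
  have hpast_row := indep_iSup_of_disjoint (fun p => (hξ p.1 p.2).comap_le) hiIndep hdisj
  rw [IndepFun_iff_Indep]
  exact indep_of_indep_of_le_left
    (indep_of_indep_of_le_right hpast_row (measurable_innovation_row fun _ => rfl).comap_le)
    (measurable_chain_past hΦ hX0 hXrec j.2.le).comap_le

end Chain

section Rademacher

variable {Ω α : Type*} [MeasurableSpace Ω] [MeasurableSpace α] {μ : Measure Ω} {m : ℕ}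

lemma ProbabilityTheory.iIndepFun.measureReal_preimage_signCube {Z : Fin m → Ω → ℝ}
    (hZ : iIndepFun Z μ) (hrad : ∀ i, μ {ω | Z i ω = 1} = 1 / 2 ∧ μ {ω | Z i ω = -1} = 1 / 2)
    {y : Fin m → ℝ} (hy : y ∈ signCube m) :
    μ.real ((fun ω i => Z i ω) ⁻¹' {y}) = (2 ^ m)⁻¹ := by
  have hhalf : ∀ i, μ (Z i ⁻¹' {y i}) = 1 / 2 := fun i => by
    rcases mem_signCube.mp hy i with h | h
    · rw [h]; exact (hrad i).2
    · rw [h]; exact (hrad i).1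
  rw [measureReal_def, hZ.measure_pi_preimage_singleton, prod_congr rfl fun i _ => hhalf i]
  simp

lemma integral_comp_eq_integral_cubeMean [IsProbabilityMeasure μ] {X : Ω → α}
    {Y : Ω → Fin m → ℝ} (hX : Measurable X) (hY : Measurable Y) (hXY : IndepFun X Y μ)
    (hY_ae : ∀ᵐ ω ∂μ, Y ω ∈ signCube m)
    (hY_law : ∀ y ∈ signCube m, μ.real (Y ⁻¹' {y}) = (2 ^ m)⁻¹)
    {g : α → (Fin m → ℝ) → ℝ} (hg : ∀ y, Measurable fun x => g x y) {C : ℝ}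
    (hC : ∀ x y, |g x y| ≤ C) :
    ∫ ω, g (X ω) (Y ω) ∂μ = ∫ ω, cubeMean (g (X ω)) ∂μ := by
  have hint : ∀ y, Integrable (fun ω => g (X ω) y) μ := fun y =>
    .of_bound ((hg y).comp hX).aestronglyMeasurable C (ae_of_all _ fun ω => hC _ _)
  rw [integral_comp_eq_sum_of_indepFun hX hY hXY hY_ae (fun y _ => hg y) (fun y _ => hint y)]
  simp_rw [cubeMean]
  rw [integral_const_mul, integral_finsetSum _ fun y _ => hint y, mul_sum]
  exact sum_congr rfl fun y hy => by rw [hY_law y hy]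

end Rademacher

section BackwardRecursion

variable {α : Type*} [MeasurableSpace α] {J m : ℕ} {Φ : α → (Fin m → ℝ) → α} {q : ℕ → α → ℝ}

lemma measurable_and_abs_le_of_backward (hΦ : Measurable (Function.uncurry Φ)) {C : ℝ}
    (hqJ : Measurable (q J)) (hqJ_le : ∀ x, |q J x| ≤ C)
    (hqrec : ∀ j : Fin J, ∀ x, q j x = cubeMean fun y => q (j + 1) (Φ x y))
    {n : ℕ} (hn : n ≤ J) : Measurable (q n) ∧ ∀ x, |q n x| ≤ C := by
  induction hn using Nat.decreasingInduction with
  | self => exact ⟨hqJ, hqJ_le⟩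
  | of_succ k hk ih =>
    rw [funext (hqrec ⟨k, hk⟩)]
    refine ⟨?_, fun x => abs_cubeMean_le fun y => ih.2 _⟩
    exact measurable_const.mul (Finset.measurable_sum _ fun y _ =>
      ih.1.comp (hΦ.comp (measurable_id.prodMk measurable_const)))

end BackwardRecursion

section RademacherChain

variable {Ω α : Type*} {J m : ℕ} {ξ : Fin J → Fin m → Ω → ℝ} {Φ : α → (Fin m → ℝ) → α}
  {x0 : α} {X : ℕ → Ω → α} {q : ℕ → α → ℝ}

lemma increment_eq_sum_walsh
    (hXrec : ∀ j : Fin J, ∀ ω, X ((j : ℕ) + 1) ω = Φ (X (j : ℕ) ω) (fun i => ξ j i ω))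
    (hqrec : ∀ j : Fin J, ∀ x, q j x = cubeMean fun y => q (j + 1) (Φ x y))
    (j : Fin J) {ω : Ω} (hω : (fun i => ξ j i ω) ∈ signCube m) :
    q (j + 1) (X (j + 1) ω) - q j (X j ω) = ∑ k ∈ univ \ {0},
      walshCoeff (fun y => q (j + 1) (Φ (X j ω) y)) k * walsh k fun i => ξ j i ω := by
  rw [hXrec, hqrec]
  exact sub_cubeMean_eq_sum_walsh (fun y => q (j + 1) (Φ (X j ω) y)) hω

variable [MeasurableSpace Ω] [MeasurableSpace α] {μ : Measure Ω}

lemma ae_row_mem_signCube [IsProbabilityMeasure μ] (hmeas : ∀ j i, Measurable (ξ j i))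
    (hrad : ∀ j i, μ {ω | ξ j i ω = 1} = 1 / 2 ∧ μ {ω | ξ j i ω = -1} = 1 / 2) :
    ∀ᵐ ω ∂μ, ∀ j, (fun i => ξ j i ω) ∈ signCube m := by
  simp_rw [mem_signCube]
  rw [ae_all_iff]
  exact fun j => ae_all_iff.mpr fun i =>
    ae_eq_neg_one_or_eq_one (hmeas j i) (hrad j i).1 (hrad j i).2

lemma measurable_chain (hmeas : ∀ j i, Measurable (ξ j i))
    (hΦ : Measurable (Function.uncurry Φ)) (hX0 : ∀ ω, X 0 ω = x0)
    (hXrec : ∀ j : Fin J, ∀ ω, X ((j : ℕ) + 1) ω = Φ (X (j : ℕ) ω) (fun i => ξ j i ω))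
    {n : ℕ} (hn : n ≤ J) : Measurable (X n) :=
  (measurable_chain_past hΦ hX0 hXrec hn).mono
    (iSup₂_le fun p _ => (hmeas p.1 p.2).comap_le) le_rfl

lemma integral_comp_chain_eq_initial [IsProbabilityMeasure μ] (hmeas : ∀ j i, Measurable (ξ j i))
    (hindep : iIndepFun (fun p : Fin J × Fin m => ξ p.1 p.2) μ)
    (hrad : ∀ j i, μ {ω | ξ j i ω = 1} = 1 / 2 ∧ μ {ω | ξ j i ω = -1} = 1 / 2)
    (hΦ : Measurable (Function.uncurry Φ)) (hX0 : ∀ ω, X 0 ω = x0)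
    (hXrec : ∀ j : Fin J, ∀ ω, X ((j : ℕ) + 1) ω = Φ (X (j : ℕ) ω) (fun i => ξ j i ω))
    {C : ℝ} (hq : ∀ n ≤ J, Measurable (q n) ∧ ∀ x, |q n x| ≤ C)
    (hqrec : ∀ j : Fin J, ∀ x, q j x = cubeMean fun y => q (j + 1) (Φ x y))
    {n : ℕ} (hn : n ≤ J) : ∫ ω, q n (X n ω) ∂μ = q 0 x0 := by
  induction n with
  | zero => simp [hX0]
  | succ n ih =>
    let j : Fin J := ⟨n, hn⟩
    have hrow_law : ∀ y ∈ signCube m, μ.real ((fun ω i => ξ j i ω) ⁻¹' {y}) = (2 ^ m)⁻¹ :=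
      fun y => (hindep.precomp (g := fun i => (j, i)) fun _ _ h => (Prod.ext_iff.mp h).2
        ).measureReal_preimage_signCube (hrad j)
    calc ∫ ω, q (n + 1) (X (n + 1) ω) ∂μ = ∫ ω, q (n + 1) (Φ (X n ω) fun i => ξ j i ω) ∂μ :=
          integral_congr_ae (ae_of_all _ fun ω => congrArg _ (hXrec j ω))
      _ = ∫ ω, cubeMean (fun y => q (n + 1) (Φ (X n ω) y)) ∂μ :=
          integral_comp_eq_integral_cubeMean (g := fun x y => q (n + 1) (Φ x y))
            (measurable_chain hmeas hΦ hX0 hXrec (by omega))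
            (measurable_pi_lambda _ fun i => hmeas j i)
            (indepFun_chain_row hmeas hindep hΦ hX0 hXrec j)
            ((ae_row_mem_signCube hmeas hrad).mono fun _ h => h j) hrow_law
            (fun y => (hq _ hn).1.comp (hΦ.comp (measurable_id.prodMk measurable_const)))
            (fun _ _ => (hq _ hn).2 _)
      _ = q 0 x0 :=
          (integral_congr_ae (ae_of_all _ fun ω => (hqrec j (X n ω)).symm)).trans (ih (by omega))

end RademacherChain

/-- Discrete-time Clark–Ocone-type representation for a Markov chain
`X_j = Φ(X_{j-1}, ξ_j)` driven by i.i.d. Rademacher innovations: with `q_J = f` and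
`q_{j-1}(x) = 2^{-m} ∑_{y ∈ {-1,1}^m} q_j(Φ(x,y))`, almost surely
`f(X_J) = E[f(X_J)] + ∑_{j=1}^J ∑_{k ∈ {0,1}^m \ {0}} a_{j,k}(X_{j-1}) ∏ᵢ (ξ_j^i)^{kᵢ}`,
where `a_{j,k}(x) = 2^{-m} ∑_{y ∈ {-1,1}^m} (∏ᵢ yᵢ^{kᵢ}) q_j(Φ(x,y))`. -/
theorem clark_ocone_representation {Ω : Type*} [MeasurableSpace Ω] (μ : Measure Ω)
    [IsProbabilityMeasure μ] (J m d : ℕ) (ξ : Fin J → Fin m → Ω → ℝ)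
    (hmeas : ∀ j i, Measurable (ξ j i))
    (hindep : iIndepFun (fun p : Fin J × Fin m => ξ p.1 p.2) μ)
    (hrad : ∀ j i, μ {ω | ξ j i ω = 1} = 1/2 ∧ μ {ω | ξ j i ω = -1} = 1/2)
    (Φ : (Fin d → ℝ) → (Fin m → ℝ) → (Fin d → ℝ))
    (hΦ : Measurable (Function.uncurry Φ))
    (x0 : Fin d → ℝ) (X : ℕ → Ω → (Fin d → ℝ))
    (hX0 : ∀ ω, X 0 ω = x0)
    (hXrec : ∀ j : Fin J, ∀ ω, X ((j : ℕ) + 1) ω = Φ (X (j : ℕ) ω) (fun i => ξ j i ω))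
    (f : (Fin d → ℝ) → ℝ) (hf : Measurable f) (hfbd : ∃ C, ∀ x, |f x| ≤ C)
    (q : ℕ → (Fin d → ℝ) → ℝ) (hqJ : q J = f)
    (hqrec : ∀ j : Fin J, ∀ x, q (j : ℕ) x = ((2 : ℝ) ^ m)⁻¹ *
      ∑ y ∈ Fintype.piFinset (fun _ : Fin m => ({-1, 1} : Finset ℝ)),
        q ((j : ℕ) + 1) (Φ x y)) :
    ∀ᵐ ω ∂μ, f (X J ω)
      = (∫ ω', f (X J ω') ∂μ)
        + ∑ j : Fin J, ∑ k ∈ (Finset.univ \ {(0 : Fin m → Fin 2)}),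
            (((2 : ℝ) ^ m)⁻¹ *
              ∑ y ∈ Fintype.piFinset (fun _ : Fin m => ({-1, 1} : Finset ℝ)),
                (∏ i, (y i) ^ (k i : ℕ)) * q ((j : ℕ) + 1) (Φ (X (j : ℕ) ω) y))
            * ∏ i, (ξ j i ω) ^ (k i : ℕ) := by
  obtain ⟨C, hC⟩ := hfbd
  subst hqJ
  have hq : ∀ n ≤ J, Measurable (q n) ∧ ∀ x, |q n x| ≤ C :=
    fun n => measurable_and_abs_le_of_backward hΦ hf hC hqrec
  rw [integral_comp_chain_eq_initial hmeas hindep hrad hΦ hX0 hXrec hq hqrec le_rfl]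
  filter_upwards [ae_row_mem_signCube hmeas hrad] with ω hω
  have htelescope :
      q J (X J ω) - q 0 x0 = ∑ j : Fin J, (q (j + 1) (X (j + 1) ω) - q j (X j ω)) := by
    rw [Fin.sum_univ_eq_sum_range (fun n => q (n + 1) (X (n + 1) ω) - q n (X n ω)),
      sum_range_sub (fun n => q n (X n ω)), hX0]
  rw [← sub_eq_iff_eq_add', htelescope]
  exact sum_congr rfl fun j _ => increment_eq_sum_walsh hXrec hqrec j (hω j)
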